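/- arXiv:1709.01772 — 3 statements merged into one kernel-verified Lean document; each statement's English description precedes it below -/
import Mathlib

section
/- Let k be a field of characteristic zero and let {-,-} be a Poisson bracket on the polynomial algebra A = k[x_1, …, x_n]. Define δ : A → A by δ(f) = Σ_{j=1}^n ∂({f, x_j})/∂x_j. Then δ is a k-linear derivation of A: δ(fg) = f·δ(g) + δ(f)·g for all f, g ∈ A. -/
open MvPolynomial

/-- A Poisson bracket on a commutative `k`-algebra `A`: a `k`-bilinear map that is
antisymmetric, satisfies the Jacobi identity and the Leibniz rule. -/
structure PoissonBracket (k A : Type*) [CommSemiring k] [CommRing A] [Algebra k A] where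
  bracket : A →ₗ[k] A →ₗ[k] A
  antisymm : ∀ a b, bracket a b = - bracket b a
  jacobi : ∀ a b c, bracket a (bracket b c) = bracket (bracket a b) c + bracket b (bracket a c)
  leibniz : ∀ a b c, bracket (a * b) c = a * bracket b c + bracket a c * b

section Aux

variable {k : Type*} [Field k] [CharZero k] {n : ℕ}
  (P : PoissonBracket k (MvPolynomial (Fin n) k))

lemma bracket_one (c : MvPolynomial (Fin n) k) : P.bracket 1 c = 0 := by
  have h := P.leibniz 1 1 c
  simp only [one_mul, mul_one] at h
  linear_combination -h

lemma bracket_C (a : k) (c : MvPolynomial (Fin n) k) : P.bracket (C a) c = 0 := by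
  have : (C a : MvPolynomial (Fin n) k) = a • 1 := by
    rw [smul_eq_C_mul, mul_one]
  rw [this, map_smul, LinearMap.smul_apply, bracket_one, smul_zero]

lemma bracket_eq_sum (c h : MvPolynomial (Fin n) k) :
    P.bracket h c = ∑ i : Fin n, pderiv i h * P.bracket (X i) c := by
  induction h using MvPolynomial.induction_on with
  | C a => simp [bracket_C]
  | add p q hp hq =>
      simp only [map_add, LinearMap.add_apply, hp, hq, ← Finset.sum_add_distrib]
      congr 1; ext i; ring
  | mul_X p j hp =>
      rw [P.leibniz p (X j) c, hp]
      have : ∀ i : Fin n, pderiv i (p * X j) * P.bracket (X i) c =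
          pderiv i p * P.bracket (X i) c * X j +
            (if j = i then p * P.bracket (X i) c else 0) := by
        intro i
        rw [pderiv_mul, pderiv_X]
        by_cases hji : j = i <;> simp [hji, Pi.single_apply] <;> ring
      rw [Finset.sum_congr rfl (fun i _ => this i), Finset.sum_add_distrib,
        Finset.sum_ite_eq (Finset.univ : Finset (Fin n)) j
          (fun i => p * P.bracket (X i) c)]
      simp [Finset.sum_mul]
      ring

end Aux

/-- The modular derivation `f ↦ ∑ⱼ ∂({f, xⱼ})/∂xⱼ` is a derivation. -/
theorem modular_derivation_is_derivation
    {k : Type*} [Field k] [CharZero k] {n : ℕ}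
    (P : PoissonBracket k (MvPolynomial (Fin n) k)) :
    ∀ f g : MvPolynomial (Fin n) k,
      ∑ j : Fin n, pderiv j (P.bracket (f * g) (X j)) =
        f * (∑ j : Fin n, pderiv j (P.bracket g (X j))) +
          (∑ j : Fin n, pderiv j (P.bracket f (X j))) * g := by
  intro f g
  have expand : ∀ j : Fin n, pderiv j (P.bracket (f * g) (X j)) =
      pderiv j f * P.bracket g (X j) + f * pderiv j (P.bracket g (X j)) +
        (pderiv j (P.bracket f (X j)) * g + P.bracket f (X j) * pderiv j g) := by
    intro j
    rw [P.leibniz f g (X j), map_add, pderiv_mul, pderiv_mul]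
    try ring
  rw [Finset.sum_congr rfl (fun j _ => expand j)]
  rw [Finset.sum_add_distrib, Finset.sum_add_distrib, Finset.sum_add_distrib]
  have cross : (∑ j : Fin n, pderiv j f * P.bracket g (X j)) +
      ∑ j : Fin n, P.bracket f (X j) * pderiv j g = 0 := by
    have h1 : (∑ j : Fin n, pderiv j f * P.bracket g (X j)) =
        ∑ j : Fin n, ∑ i : Fin n,
          pderiv i f * (pderiv j g * P.bracket (X j) (X i)) := by
      rw [Finset.sum_comm]
      refine Finset.sum_congr rfl fun i _ => ?_
      rw [bracket_eq_sum P (X i) g, Finset.mul_sum]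
      try (refine Finset.sum_congr rfl fun j _ => ?_; ring)
    have h2 : (∑ j : Fin n, P.bracket f (X j) * pderiv j g) =
        ∑ j : Fin n, ∑ i : Fin n,
          pderiv i f * (pderiv j g * P.bracket (X i) (X j)) := by
      refine Finset.sum_congr rfl fun j _ => ?_
      rw [bracket_eq_sum P (X j) f, Finset.sum_mul]
      refine Finset.sum_congr rfl fun i _ => ?_
      ring
    rw [h1, h2, ← Finset.sum_add_distrib]
    refine Finset.sum_eq_zero fun j _ => ?_
    rw [← Finset.sum_add_distrib]
    refine Finset.sum_eq_zero fun i _ => ?_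
    have ha := P.antisymm (X j : MvPolynomial (Fin n) k) (X i)
    linear_combination (pderiv i f * pderiv j g) * ha
  rw [Finset.mul_sum, Finset.sum_mul]
  linear_combination cross
end

section
/- Let A = ℂ[x,y] be the polynomial algebra in two variables over the complex numbers, equipped with a Poisson bracket satisfying {x,y} = xy, and let i be a non-negative integer. Let Δ : A → A ⊗ A be the ℂ-algebra homomorphism determined by Δ(y) = y ⊗ y and Δ(x) = x ⊗ 1 + y^i ⊗ x, and equip A ⊗ A with the product Poisson bracket. Then Δ is a Poisson morphism; in particular Δ({x,y}) = {Δ(x), Δ(y)}, i.e. Δ(xy) = xy ⊗ y + y^{i+1} ⊗ xy in A ⊗ A. -/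
open MvPolynomial
open scoped TensorProduct

section Aux
variable {A : Type*} [CommRing A] [Algebra ℂ A] (P : PoissonBracket ℂ A)

lemma PB_self (a : A) : P.bracket a a = 0 := by
  have h2 : (2 : ℂ) • P.bracket a a = 0 := by
    rw [two_smul, add_eq_zero_iff_eq_neg]
    exact P.antisymm a a
  have := smul_eq_zero.mp h2
  simpa using this.resolve_left (by norm_num)

lemma PB_one (a : A) : P.bracket 1 a = 0 := by
  have h := P.leibniz 1 1 a
  simp only [one_mul, mul_one] at h
  exact (left_eq_add.mp h)

lemma PB_one' (a : A) : P.bracket a 1 = 0 := by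
  rw [P.antisymm, PB_one, neg_zero]

lemma PB_pow_self (b : A) (n : ℕ) : P.bracket (b ^ n) b = 0 := by
  induction n with
  | zero => simpa using PB_one P b
  | succ n ih => rw [pow_succ, P.leibniz, ih, PB_self]; ring

lemma PB_algebraMap (c : ℂ) (a : A) : P.bracket (algebraMap ℂ A c) a = 0 := by
  rw [Algebra.algebraMap_eq_smul_one, map_smul, LinearMap.smul_apply, PB_one, smul_zero]

end Aux


/-- Let `A = ℂ[x,y]` with Poisson bracket `{x,y} = xy`, let `i ≥ 0`, and let
`Δ : A → A ⊗ A` be the algebra map with `Δ(y) = y ⊗ y`, `Δ(x) = x ⊗ 1 + yⁱ ⊗ x`.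
Then `Δ` is a Poisson morphism for the product bracket on `A ⊗ A`; in particular
`Δ(xy) = xy ⊗ y + y^(i+1) ⊗ xy`. -/
theorem comul_is_poisson_morphism_example
    (P : PoissonBracket ℂ (MvPolynomial (Fin 2) ℂ))
    (hxy : P.bracket (X 0) (X 1) = X 0 * X 1)
    (PT : PoissonBracket ℂ (MvPolynomial (Fin 2) ℂ ⊗[ℂ] MvPolynomial (Fin 2) ℂ))
    (hPT : ∀ a c b d : MvPolynomial (Fin 2) ℂ,
      PT.bracket (a ⊗ₜ[ℂ] b) (c ⊗ₜ[ℂ] d) =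
        P.bracket a c ⊗ₜ[ℂ] (b * d) + (a * c) ⊗ₜ[ℂ] P.bracket b d)
    (i : ℕ)
    (Δ : MvPolynomial (Fin 2) ℂ →ₐ[ℂ] MvPolynomial (Fin 2) ℂ ⊗[ℂ] MvPolynomial (Fin 2) ℂ)
    (hΔx : Δ (X 0) = X 0 ⊗ₜ[ℂ] 1 + ((X 1) ^ i) ⊗ₜ[ℂ] X 0)
    (hΔy : Δ (X 1) = X 1 ⊗ₜ[ℂ] X 1) :
    (∀ f g : MvPolynomial (Fin 2) ℂ, Δ (P.bracket f g) = PT.bracket (Δ f) (Δ g)) ∧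
      Δ (X 0 * X 1) =
        (X 0 * X 1) ⊗ₜ[ℂ] X 1 + ((X 1) ^ (i + 1)) ⊗ₜ[ℂ] (X 0 * X 1) := by
  set A := MvPolynomial (Fin 2) ℂ
  -- Q f g : Δ preserves the bracket on f, g
  set Q : A → A → Prop := fun f g => Δ (P.bracket f g) = PT.bracket (Δ f) (Δ g) with hQ
  have Qsymm : ∀ {f g}, Q f g → Q g f := by
    intro f g h
    simp only [hQ] at *
    rw [P.antisymm, map_neg, h, PT.antisymm, neg_neg]
  have QC : ∀ (c : ℂ) (g : A), Q (C c) g := by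
    intro c g
    simp only [hQ]
    have : (C c : A) = algebraMap ℂ A c := rfl
    rw [this, PB_algebraMap, map_zero, AlgHom.commutes, PB_algebraMap]
  have Qadd : ∀ {p q g}, Q p g → Q q g → Q (p + q) g := by
    intro p q g hp hq
    simp only [hQ] at *
    simp only [map_add, LinearMap.add_apply, hp, hq]
  have Qmul : ∀ {p q g}, Q p g → Q q g → Q (p * q) g := by
    intro p q g hp hq
    simp only [hQ] at *
    rw [P.leibniz, map_add, map_mul, map_mul, hp, hq, map_mul, PT.leibniz]
  -- generator computations
  have hyx : P.bracket (X 1) (X 0) = -(X 0 * X 1) := by rw [P.antisymm, hxy]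
  have Qgen : ∀ n m : Fin 2, Q (X n) (X m) := by
    have Qxx : Q (X 0) (X 0) := by
      simp only [hQ]; rw [PB_self, map_zero, PB_self]
    have Qyy : Q (X 1) (X 1) := by
      simp only [hQ]; rw [PB_self, map_zero, PB_self]
    have Qxy : Q (X 0) (X 1) := by
      simp only [hQ]
      rw [hxy, map_mul, hΔx, hΔy]
      rw [map_add, LinearMap.add_apply, hPT, hPT, hxy, PB_one P, PB_pow_self P]
      simp [Algebra.TensorProduct.tmul_mul_tmul, add_mul, pow_succ]
    intro n m
    fin_cases n <;> fin_cases m <;> first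
      | exact Qxx | exact Qyy | exact Qxy | exact Qsymm Qxy
  have QXg : ∀ (n : Fin 2) (g : A), Q (X n) g := by
    intro n g
    induction g using MvPolynomial.induction_on with
    | C c => exact Qsymm (QC c _)
    | add p q hp hq =>
      have := Qadd (Qsymm hp) (Qsymm hq); exact Qsymm this
    | mul_X p m hp =>
      exact Qsymm (Qmul (Qsymm hp) (Qgen m n))
  have main : ∀ f g : A, Q f g := by
    intro f g
    induction f using MvPolynomial.induction_on with
    | C c => exact QC c g
    | add p q hp hq => exact Qadd hp hq
    | mul_X p n hp => exact Qmul hp (QXg n g)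
  refine ⟨main, ?_⟩
  rw [map_mul, hΔx, hΔy]
  simp [Algebra.TensorProduct.tmul_mul_tmul, add_mul, pow_succ]
end

section
/- Let k be an algebraically closed field of characteristic zero and let H be a commutative Hopf k-algebra which is finitely generated as a k-algebra. Suppose H is connected graded as an algebra, i.e. H = ⊕_{i ≥ 0} H(i) with H(i)H(j) ⊆ H(i+j) and H(0) = k·1. Then H is isomorphic as a k-algebra to a polynomial algebra k[X_1, …, X_n] in finitely many variables. -/
/-!
The degree-zero projection of a connected grading is a character `χ` of `H` whose kernel `I`
(the irrelevant ideal) satisfies `⋂ Iˢ = 0`, and by graded Nakayama homogeneous elements whose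
classes form a basis of `I/I²` generate `H`. It remains to see that such `x₁, …, xₙ` are
algebraically independent. Translation by `χ` in the convolution group of characters moves `χ`
to the counit `ε`. A linear form `δ` that is a derivation at `ε` yields the derivation
`D = (id ⊗ δ) ∘ Δ` of `H` with `ε ∘ D = δ`. Taking the `δₗ` dual to the classes of the `xⱼ` and
applying `Dₗ` to a relation `f(x) = 0` gives `∂ₗf(x) = ∑ⱼ ∂ⱼf(x) cⱼₗ` with `cⱼₗ ∈ ker ε`, so
`∂ₗf(x) ∈ ⋂ (ker ε)ˢ = 0`; in characteristic zero, induction on the degree gives `f = 0`.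
-/

namespace MvPolynomial

variable {R σ : Type*} [CommSemiring R] {i : σ} {f : MvPolynomial σ R}

theorem totalDegree_pderiv_lt (h : pderiv i f ≠ 0) : (pderiv i f).totalDegree < f.totalDegree := by
  classical
  have hlt : ∀ m ∈ (pderiv i f).support, (m.sum fun _ e => e) < f.totalDegree := by
    intro m hm
    rw [mem_support_iff, coeff_pderiv] at hm
    have hdeg := le_totalDegree (mem_support_iff.mpr (left_ne_zero_of_mul hm))
    rw [Finsupp.sum_add_index' (fun _ => rfl) (fun _ _ _ => rfl), Finsupp.sum_single_index rfl]
      at hdeg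
    omega
  obtain ⟨m, hm⟩ := support_nonempty.mpr h
  exact (Finset.sup_lt_iff ((Nat.zero_le _).trans_lt (hlt m hm))).mpr hlt

theorem eq_C_of_forall_pderiv_eq_zero [IsAddTorsionFree R] (h : ∀ i, pderiv i f = 0) :
    f = C (coeff 0 f) := by
  classical
  ext m
  rw [coeff_C]
  split_ifs with hm
  · rw [hm]
  obtain ⟨i, hi⟩ : ∃ i, m i ≠ 0 := Finsupp.ne_iff.mp (Ne.symm hm)
  have hle : Finsupp.single i 1 ≤ m := Finsupp.single_le_iff.mpr (Nat.one_le_iff_ne_zero.mpr hi)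
  have := congrArg (coeff (m - Finsupp.single i 1)) (h i)
  rwa [coeff_pderiv, tsub_add_cancel_of_le hle, coeff_zero, Finsupp.tsub_apply,
    Finsupp.single_eq_same, ← Nat.cast_add_one, Nat.sub_add_cancel (Nat.one_le_iff_ne_zero.mpr hi),
    mul_comm, ← nsmul_eq_mul, nsmul_eq_zero_iff_right hi] at this

theorem eq_zero_of_forall_pderiv [IsAddTorsionFree R] {P : MvPolynomial σ R → Prop}
    (hC : ∀ c, P (C c) → c = 0) (hpderiv : ∀ f i, P f → P (pderiv i f)) (hf : P f) : f = 0 := by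
  induction hdeg : f.totalDegree using Nat.strong_induction_on generalizing f with
  | _ d ih =>
    have hconst : ∀ i, pderiv i f = 0 := fun i => by
      by_contra hne
      exact hne (ih _ (hdeg ▸ totalDegree_pderiv_lt hne) (hpderiv f i hf) rfl)
    rw [eq_C_of_forall_pderiv_eq_zero hconst] at hf ⊢
    rw [hC _ hf, C_0]

end MvPolynomial

open MvPolynomial in
theorem Derivation.map_aeval_eq_sum_pderiv {R σ A M : Type*} [CommSemiring R] [CommSemiring A]
    [Algebra R A] [AddCommMonoid M] [Module A M] [Module R M] [IsScalarTower R A M] [Fintype σ]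
    (D : Derivation R A M) (x : σ → A) (f : MvPolynomial σ R) :
    D (aeval x f) = ∑ i, aeval x (pderiv i f) • D (x i) := by
  classical
  induction f using MvPolynomial.induction_on with
  | C c => simp
  | add p q hp hq => simp only [map_add, hp, hq, add_smul, Finset.sum_add_distrib]
  | mul_X p i hp =>
    simp only [map_mul, aeval_X, Derivation.leibniz, hp, Finset.smul_sum, smul_smul,
      smul_eq_mul, map_add, add_smul, Finset.sum_add_distrib, pderiv_X, Pi.single_apply]
    congr 1
    simp [apply_ite (aeval x)]

theorem Ideal.mem_pow_of_eq_sum_mul {A κ : Type*} [CommSemiring A] [Fintype κ] {I : Ideal A}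
    {v : κ → A} {c : κ → κ → A} (hv : ∀ l, v l = ∑ j, v j * c j l) (hc : ∀ j l, c j l ∈ I)
    (s : ℕ) (l : κ) : v l ∈ I ^ s := by
  induction s generalizing l with
  | zero => simp
  | succ s ih =>
    rw [hv l, pow_succ]
    exact Ideal.sum_mem _ fun j _ => Ideal.mul_mem_mul (ih j) (hc j l)

open Coalgebra Bialgebra TensorProduct

section PointDerivation

variable {k A B : Type*} [CommSemiring k] [CommSemiring A] [Algebra k A] [CommSemiring B]
  [Algebra k B]

def IsPointDerivation (χ : A →ₐ[k] k) (δ : A →ₗ[k] k) : Prop :=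
  ∀ a b, δ (a * b) = χ a * δ b + χ b * δ a

theorem IsPointDerivation.comp {χ : A →ₐ[k] k} {δ : A →ₗ[k] k} (hδ : IsPointDerivation χ δ)
    (φ : B →ₐ[k] A) : IsPointDerivation (χ.comp φ) (δ ∘ₗ φ.toLinearMap) := fun a b => by
  simpa using hδ (φ a) (φ b)

noncomputable def evalRight (δ : B →ₗ[k] k) : A ⊗[k] B →ₗ[k] A :=
  (TensorProduct.rid k A).toLinearMap ∘ₗ δ.lTensor A

@[simp]
theorem evalRight_tmul (δ : B →ₗ[k] k) (a : A) (b : B) :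
    evalRight δ (a ⊗ₜ b) = δ b • a := by
  simp [evalRight]

theorem IsPointDerivation.evalRight_mul {χ : B →ₐ[k] k} {δ : B →ₗ[k] k}
    (hδ : IsPointDerivation χ δ) (s t : A ⊗[k] B) :
    evalRight δ (s * t) =
      evalRight χ.toLinearMap s * evalRight δ t +
        evalRight δ s * evalRight χ.toLinearMap t := by
  induction s using TensorProduct.induction_on with
  | zero => simp
  | add s s' hs hs' => simp only [add_mul, map_add, hs, hs']; ring
  | tmul a b =>
    induction t using TensorProduct.induction_on with
    | zero => simp
    | add t t' ht ht' => simp only [mul_add, map_add, ht, ht']; ring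
    | tmul a' b' =>
      simp only [Algebra.TensorProduct.tmul_mul_tmul, evalRight_tmul, hδ b b',
        AlgHom.toLinearMap_apply, Algebra.smul_def, map_add, map_mul]
      ring

end PointDerivation

namespace AlgHom

variable {k H : Type*} [CommRing k] [CommRing H] [Algebra k H] (χ : H →ₐ[k] k)

theorem sub_algebraMap_mem_ker (h : H) : h - algebraMap k H (χ h) ∈ RingHom.ker χ := by
  simp

noncomputable def cotangentMap : H →ₗ[k] (RingHom.ker χ).Cotangent :=
  ((RingHom.ker χ).toCotangent.restrictScalars k).comp
    ((LinearMap.id - Algebra.linearMap k H ∘ₗ χ.toLinearMap).codRestrict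
      ((RingHom.ker χ).restrictScalars k) χ.sub_algebraMap_mem_ker)

theorem cotangentMap_apply (h : H) :
    χ.cotangentMap h = (RingHom.ker χ).toCotangent ⟨_, χ.sub_algebraMap_mem_ker h⟩ := rfl

theorem cotangentMap_eq_zero_iff {h : H} :
    χ.cotangentMap h = 0 ↔ h - algebraMap k H (χ h) ∈ RingHom.ker χ ^ 2 :=
  Ideal.toCotangent_eq_zero _ _

theorem cotangentMap_algebraMap (c : k) : χ.cotangentMap (algebraMap k H c) = 0 := by
  simp [cotangentMap_eq_zero_iff]

theorem cotangentMap_eq_zero_of_mem_sq {z : H} (hz : z ∈ RingHom.ker χ ^ 2) :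
    χ.cotangentMap z = 0 := by
  rwa [cotangentMap_eq_zero_iff, RingHom.mem_ker.mp (Ideal.pow_le_self two_ne_zero hz), map_zero,
    sub_zero]

theorem cotangentMap_mul (a b : H) :
    χ.cotangentMap (a * b) = χ a • χ.cotangentMap b + χ b • χ.cotangentMap a := by
  have hprod : (a - algebraMap k H (χ a)) * (b - algebraMap k H (χ b)) ∈ RingHom.ker χ ^ 2 :=
    pow_two (RingHom.ker χ) ▸
      Ideal.mul_mem_mul (χ.sub_algebraMap_mem_ker a) (χ.sub_algebraMap_mem_ker b)
  have hab : a * b = (a - algebraMap k H (χ a)) * (b - algebraMap k H (χ b)) + χ a • b + χ b • a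
      - algebraMap k H (χ a * χ b) := by
    simp only [Algebra.smul_def, map_mul]; ring
  rw [hab, map_sub, map_add, map_add, χ.cotangentMap_eq_zero_of_mem_sq hprod,
    cotangentMap_algebraMap, map_smul, map_smul, zero_add, sub_zero]

theorem cotangentMap_surjective : Function.Surjective χ.cotangentMap := by
  intro v
  obtain ⟨⟨x, hx⟩, rfl⟩ := (RingHom.ker χ).toCotangent_surjective v
  refine ⟨x, ?_⟩
  rw [cotangentMap_apply]
  congr
  rw [RingHom.mem_ker.mp hx, map_zero, sub_zero]

theorem span_cotangentMap_image_eq_top {s : Set H} (hs : Algebra.adjoin k s = ⊤) :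
    Submodule.span k (χ.cotangentMap '' s) = ⊤ := by
  refine Submodule.eq_top_iff'.mpr fun v => ?_
  obtain ⟨h, rfl⟩ := χ.cotangentMap_surjective v
  induction (hs ▸ Algebra.mem_top : h ∈ Algebra.adjoin k s) using Algebra.adjoin_induction with
  | mem x hx => exact Submodule.subset_span ⟨x, hx, rfl⟩
  | algebraMap c => rw [cotangentMap_algebraMap]; exact zero_mem _
  | add a b _ _ ha hb => rw [map_add]; exact add_mem ha hb
  | mul a b _ _ ha hb =>
    rw [cotangentMap_mul]; exact add_mem (Submodule.smul_mem _ _ hb) (Submodule.smul_mem _ _ ha)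

theorem isPointDerivation_comp_cotangentMap (φ : (RingHom.ker χ).Cotangent →ₗ[k] k) :
    IsPointDerivation χ (φ ∘ₗ χ.cotangentMap) := fun a b => by
  simp [cotangentMap_mul]

end AlgHom

section Bialgebra

variable {k A : Type*} [CommSemiring k] [CommRing A] [Bialgebra k A]

theorem counit_evalRight (δ : A →ₗ[k] k) (t : A ⊗[k] A) :
    counit (evalRight δ t) = δ (TensorProduct.lid k A (counit.rTensor A t)) := by
  induction t using TensorProduct.induction_on with
  | zero => simp
  | add s t hs ht => simp only [map_add, hs, ht]
  | tmul a b => simp [mul_comm]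

theorem evalRight_counit_comul (a : A) :
    evalRight (counitAlgHom k A).toLinearMap (comul a) = a := by
  simp [evalRight, Coalgebra.lTensor_counit_comul]

noncomputable def IsPointDerivation.derivation {δ : A →ₗ[k] k}
    (hδ : IsPointDerivation (counitAlgHom k A) δ) : Derivation k A A :=
  .mk' (evalRight δ ∘ₗ comul) fun a b => by
    rw [LinearMap.comp_apply, ← comulAlgHom_apply, map_mul, hδ.evalRight_mul, comulAlgHom_apply,
      comulAlgHom_apply, evalRight_counit_comul, evalRight_counit_comul, LinearMap.comp_apply,
      LinearMap.comp_apply, smul_eq_mul, smul_eq_mul]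
    ring

theorem IsPointDerivation.counit_derivation {δ : A →ₗ[k] k}
    (hδ : IsPointDerivation (counitAlgHom k A) δ) (a : A) : counit (hδ.derivation a) = δ a := by
  simp [IsPointDerivation.derivation, counit_evalRight, Coalgebra.rTensor_counit_comul]

end Bialgebra

open MvPolynomial in
theorem Bialgebra.algebraicIndependent_of_isPointDerivation {k H κ : Type*} [CommRing k]
    [IsAddTorsionFree k] [CommRing H] [Bialgebra k H] [Fintype κ] [DecidableEq κ]
    (hsep : ⨅ s, RingHom.ker (counitAlgHom k H) ^ s = ⊥) {x : κ → H} {δ : κ → H →ₗ[k] k}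
    (hδ : ∀ l, IsPointDerivation (counitAlgHom k H) (δ l))
    (hδx : ∀ l j, δ l (x j) = if j = l then 1 else 0) : AlgebraicIndependent k x := by
  refine (injective_iff_map_eq_zero _).mpr fun f hf => eq_zero_of_forall_pderiv
    (P := fun f => aeval x f = 0) (fun c hc => ?_) (fun f i hf => ?_) hf
  · exact algebraMap_injective H (by simpa using hc)
  have hchain : ∀ l, ∑ j, aeval x (pderiv j f) * (hδ l).derivation (x j) = 0 := fun l => by
    simpa [hf] using ((hδ l).derivation.map_aeval_eq_sum_pderiv x f).symm
  set w : κ → H := fun j => aeval x (pderiv j f)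
  have hw : ∀ l, w l = ∑ j, w j * (algebraMap k H (δ l (x j)) - (hδ l).derivation (x j)) := by
    intro l
    calc w l = ∑ j, w j * algebraMap k H (δ l (x j)) := by simp [hδx]
      _ = ∑ j, w j * algebraMap k H (δ l (x j)) - ∑ j, w j * (hδ l).derivation (x j) := by
        rw [hchain, sub_zero]
      _ = _ := by simp only [mul_sub, Finset.sum_sub_distrib]
  have hmem : w i ∈ ⨅ s, RingHom.ker (counitAlgHom k H) ^ s :=
    Ideal.mem_iInf.mpr fun s => Ideal.mem_pow_of_eq_sum_mul hw
      (fun j l => by simp [IsPointDerivation.counit_derivation]) s i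
  rwa [hsep] at hmem

open WithConv

namespace Bialgebra

variable {k H : Type*} [CommSemiring k] [CommSemiring H] [Bialgebra k H]

/-- `translate χ h = ∑ χ h₍₁₎ • h₍₂₎`: pullback along left multiplication by the point `χ`. -/
noncomputable def translate (χ : H →ₐ[k] k) : H →ₐ[k] H :=
  (toConv ((Algebra.ofId k H).comp χ) * toConv (AlgHom.id k H)).ofConv

theorem translate_comp_translate (χ ψ : H →ₐ[k] k) :
    (translate χ).comp (translate ψ) = translate (toConv ψ * toConv χ).ofConv := by
  have hofId : (translate χ).comp (Algebra.ofId k H) = Algebra.ofId k H := Subsingleton.elim _ _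
  simp only [translate] at hofId ⊢
  rw [AlgHom.comp_convMul_distrib, ← AlgHom.comp_assoc, hofId, AlgHom.comp_id,
    AlgHom.comp_convMul_distrib, toConv_ofConv, mul_assoc]

theorem translate_counitAlgHom : translate (counitAlgHom k H) = AlgHom.id k H :=
  congrArg ofConv (one_mul (toConv (AlgHom.id k H)))

theorem counitAlgHom_comp_translate (χ : H →ₐ[k] k) :
    (counitAlgHom k H).comp (translate χ) = χ := by
  rw [translate, AlgHom.comp_convMul_distrib, ← AlgHom.comp_assoc,
    Subsingleton.elim ((counitAlgHom k H).comp (Algebra.ofId k H)) (AlgHom.id k k),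
    AlgHom.comp_id, AlgHom.id_comp]
  exact congrArg ofConv (mul_one (toConv χ))

end Bialgebra

namespace HopfAlgebra

variable {k H : Type*} [CommSemiring k] [CommSemiring H] [HopfAlgebra k H]

noncomputable def translateEquiv (χ : H →ₐ[k] k) : H ≃ₐ[k] H :=
  AlgEquiv.ofAlgHom (Bialgebra.translate χ) (Bialgebra.translate (toConv χ)⁻¹.ofConv)
    (by rw [Bialgebra.translate_comp_translate, toConv_ofConv, inv_mul_cancel]
        exact Bialgebra.translate_counitAlgHom)
    (by rw [Bialgebra.translate_comp_translate, toConv_ofConv, mul_inv_cancel]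
        exact Bialgebra.translate_counitAlgHom)

end HopfAlgebra

theorem AlgHom.iInf_ker_comp_pow_eq_bot {k A B : Type*} [CommSemiring k] [CommSemiring A]
    [Algebra k A] [CommSemiring B] [Algebra k B] {χ : A →ₐ[k] k} (hsep : ⨅ s, RingHom.ker χ ^ s = ⊥)
    (e : B ≃ₐ[k] A) : ⨅ s, RingHom.ker (χ.comp (e : B →ₐ[k] A)) ^ s = ⊥ := by
  refine eq_bot_iff.mpr fun b hb => ?_
  have hker : Ideal.map (e : B →ₐ[k] A) (RingHom.ker (χ.comp (e : B →ₐ[k] A))) ≤ RingHom.ker χ :=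
    Ideal.map_le_iff_le_comap.mpr fun a ha => ha
  have hmem : e b ∈ ⨅ s, RingHom.ker χ ^ s := Ideal.mem_iInf.mpr fun s =>
    Ideal.pow_right_mono hker s (by
      rw [← Ideal.map_pow]; exact Ideal.mem_map_of_mem _ (Ideal.mem_iInf.mp hb s))
  rwa [hsep, Ideal.mem_bot, map_eq_zero_iff _ e.injective] at hmem

theorem AlgHom.algebraicIndependent_of_linearIndependent_cotangentMap {k H κ : Type*} [Field k]
    [CharZero k] [CommRing H] [HopfAlgebra k H] [Fintype κ] (χ : H →ₐ[k] k)
    (hsep : ⨅ s, RingHom.ker χ ^ s = ⊥) {x : κ → H}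
    (hx : LinearIndependent k (χ.cotangentMap ∘ x)) : AlgebraicIndependent k x := by
  classical
  obtain ⟨g, hg⟩ := LinearMap.exists_leftInverse_of_injective _
    (LinearMap.ker_eq_bot.mpr hx.finsuppLinearCombination_injective)
  set e := HopfAlgebra.translateEquiv χ
  have he : χ.comp (e.symm : H →ₐ[k] H) = counitAlgHom k H := by
    rw [← counitAlgHom_comp_translate χ, AlgHom.comp_assoc]
    ext h
    exact congrArg (counitAlgHom k H) (e.apply_symm_apply h)
  have hgx (j : κ) : g (χ.cotangentMap (x j)) = Finsupp.single j 1 := by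
    simpa using congrArg (· (Finsupp.single j 1)) hg
  refine .of_comp (e : H →ₐ[k] H) (Bialgebra.algebraicIndependent_of_isPointDerivation
    (δ := fun l => ((Finsupp.lapply l ∘ₗ g) ∘ₗ χ.cotangentMap) ∘ₗ (e.symm : H →ₐ[k] H).toLinearMap)
    (he ▸ AlgHom.iInf_ker_comp_pow_eq_bot hsep e.symm)
    (fun l => he ▸ (χ.isPointDerivation_comp_cotangentMap _).comp _) fun l j => ?_)
  simp [hgx, Finsupp.single_apply]

open DirectSum

namespace HomogeneousIdeal

variable {A σ : Type*} [CommSemiring A] [SetLike σ A] [AddSubmonoidClass σ A] (𝒜 : ℕ → σ)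
  [GradedRing 𝒜]

theorem coe_decompose_eq_zero_of_mem_irrelevant_pow {a : A} {s : ℕ}
    (ha : a ∈ (irrelevant 𝒜).toIdeal ^ s) {i : ℕ} (hi : i < s) : (decompose 𝒜 a i : A) = 0 := by
  classical
  induction s generalizing a i with
  | zero => omega
  | succ s ih =>
    rw [pow_succ] at ha
    refine Submodule.mul_induction_on ha (fun b hb c hc => ?_) fun b c hb hc => ?_
    · rw [decompose_mul, coe_mul_apply]
      refine Finset.sum_eq_zero fun jk hjk => ?_
      rw [Finset.mem_filter] at hjk
      rcases lt_or_ge jk.1 s with hj | hj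
      · rw [ih hb hj, zero_mul]
      · rw [show jk.2 = 0 by omega, show (decompose 𝒜 c 0 : A) = 0 from hc, mul_zero]
    · rw [decompose_add, DirectSum.add_apply, AddMemClass.coe_add, hb, hc, add_zero]

theorem iInf_irrelevant_pow_eq_bot : ⨅ s, (irrelevant 𝒜).toIdeal ^ s = ⊥ := by
  classical
  refine _root_.eq_bot_iff.mpr fun a ha => ?_
  rw [Ideal.mem_iInf] at ha
  rw [Ideal.mem_bot, ← sum_support_decompose 𝒜 a]
  exact Finset.sum_eq_zero fun i _ =>
    coe_decompose_eq_zero_of_mem_irrelevant_pow 𝒜 (ha (i + 1)) i.lt_succ_self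

theorem coe_decompose_mem_of_mem_irrelevant_sq {S : Subsemiring A} {d : ℕ}
    (hS : ∀ i < d, ∀ a ∈ 𝒜 i, a ∈ S) {z : A} (hz : z ∈ (irrelevant 𝒜).toIdeal ^ 2) :
    (decompose 𝒜 z d : A) ∈ S := by
  classical
  rw [pow_two] at hz
  refine Submodule.mul_induction_on hz (fun b hb c hc => ?_) fun b c hb hc => ?_
  · rw [decompose_mul, coe_mul_apply]
    refine sum_mem fun jk hjk => ?_
    rw [Finset.mem_filter] at hjk
    rcases Nat.eq_zero_or_pos jk.1 with hj | hj
    · rw [hj, show (decompose 𝒜 b 0 : A) = 0 from hb, zero_mul]; exact zero_mem S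
    rcases Nat.eq_zero_or_pos jk.2 with hk | hk
    · rw [hk, show (decompose 𝒜 c 0 : A) = 0 from hc, mul_zero]; exact zero_mem S
    exact mul_mem (hS _ (by omega) _ (decompose 𝒜 b _).2) (hS _ (by omega) _ (decompose 𝒜 c _).2)
  · rw [decompose_add, DirectSum.add_apply, AddMemClass.coe_add]; exact add_mem hb hc

end HomogeneousIdeal

namespace GradedAlgebra

section

variable {k H : Type*} [CommSemiring k] [CommSemiring H] [Algebra k H] (𝒜 : ℕ → Submodule k H)
  [GradedAlgebra 𝒜]

theorem exists_finset_homogeneous_adjoin_eq_top [Algebra.FiniteType k H] :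
    ∃ S : Finset H, (∀ x ∈ S, ∃ i, x ∈ 𝒜 i) ∧ Algebra.adjoin k (S : Set H) = ⊤ := by
  classical
  obtain ⟨T, hT⟩ := Algebra.FiniteType.out (R := k) (A := H)
  refine ⟨T.biUnion fun t => (decompose 𝒜 t).support.image fun i => (decompose 𝒜 t i : H),
    fun x hx => ?_, ?_⟩
  · obtain ⟨t, -, hx⟩ := Finset.mem_biUnion.mp hx
    obtain ⟨i, -, rfl⟩ := Finset.mem_image.mp hx
    exact ⟨i, (decompose 𝒜 t i).2⟩
  rw [← top_le_iff, ← hT, Algebra.adjoin_le_iff]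
  intro t ht
  rw [← sum_support_decompose 𝒜 t]
  exact sum_mem fun i hi => Algebra.subset_adjoin
    (Finset.mem_biUnion.mpr ⟨t, ht, Finset.mem_image.mpr ⟨i, hi, rfl⟩⟩)

theorem coe_decompose_mem_span {s : Set H} (hs : ∀ x ∈ s, ∃ i, x ∈ 𝒜 i) {a : H}
    (ha : a ∈ Submodule.span k s) (d : ℕ) : (decompose 𝒜 a d : H) ∈ Submodule.span k s := by
  induction ha using Submodule.span_induction with
  | mem x hx =>
    obtain ⟨i, hi⟩ := hs x hx
    by_cases hid : i = d
    · rw [decompose_of_mem_same 𝒜 (hid ▸ hi)]; exact Submodule.subset_span hx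
    · rw [decompose_of_mem_ne 𝒜 hi hid]; exact zero_mem _
  | zero => simp
  | add a b _ _ ha hb =>
    rw [decompose_add, DirectSum.add_apply, AddMemClass.coe_add]; exact add_mem ha hb
  | smul c a _ ha =>
    rw [decompose_smul, DFinsupp.smul_apply, SetLike.val_smul]; exact Submodule.smul_mem _ c ha

end

variable {k H : Type*} [Field k] [CommRing H] [Algebra k H] (𝒜 : ℕ → Submodule k H)
  [GradedAlgebra 𝒜] (hconn : 𝒜 0 = 1)
include hconn

theorem coe_decompose_zero_mem_bot (h : H) : (decompose 𝒜 h 0 : H) ∈ (⊥ : Subalgebra k H) := by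
  rw [← Subalgebra.mem_toSubmodule, Algebra.toSubmodule_bot, ← hconn]
  exact (decompose 𝒜 h 0).2

variable [Nontrivial H]

noncomputable def augmentation : H →ₐ[k] k :=
  (Algebra.botEquiv k H).toAlgHom.comp
    { (GradedRing.projZeroRingHom 𝒜).codRestrict (⊥ : Subalgebra k H)
        (coe_decompose_zero_mem_bot 𝒜 hconn) with
      commutes' c := Subtype.ext (decompose_of_mem_same 𝒜 (SetLike.algebraMap_mem_graded 𝒜 c)) }

theorem algebraMap_augmentation (h : H) :
    algebraMap k H (augmentation 𝒜 hconn h) = decompose 𝒜 h 0 := by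
  set x : (⊥ : Subalgebra k H) := ⟨_, coe_decompose_zero_mem_bot 𝒜 hconn h⟩
  change algebraMap k H (Algebra.botEquiv k H x) = x
  conv_rhs => rw [← (Algebra.botEquiv k H).symm_apply_apply x, Algebra.botEquiv_symm_apply]
  rfl

theorem ker_augmentation :
    RingHom.ker (augmentation 𝒜 hconn) = (HomogeneousIdeal.irrelevant 𝒜).toIdeal := by
  ext h
  rw [RingHom.mem_ker, HomogeneousIdeal.toIdeal_irrelevant, RingHom.mem_ker,
    GradedRing.projZeroRingHom_apply, ← algebraMap_augmentation 𝒜 hconn,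
    FaithfulSMul.algebraMap_eq_zero_iff]

theorem adjoin_eq_top_of_span_cotangentMap {s : Set H} (hs : ∀ x ∈ s, ∃ i, x ∈ 𝒜 i)
    (hspan : Submodule.span k ((augmentation 𝒜 hconn).cotangentMap '' s) = ⊤) :
    Algebra.adjoin k s = ⊤ := by
  classical
  set χ := augmentation 𝒜 hconn
  suffices hgr : ∀ d, ∀ h ∈ 𝒜 d, h ∈ Algebra.adjoin k s by
    refine eq_top_iff.mpr fun h _ => ?_
    rw [← sum_support_decompose 𝒜 h]
    exact sum_mem fun i _ => hgr i _ (decompose 𝒜 h i).2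
  intro d
  induction d using Nat.strong_induction_on with | _ d ih =>
  intro h hh
  rcases Nat.eq_zero_or_pos d with rfl | hd
  · rw [hconn] at hh
    obtain ⟨c, rfl⟩ := Submodule.mem_one.mp hh
    exact Subalgebra.algebraMap_mem _ c
  obtain ⟨a, ha, hqa⟩ : ∃ a ∈ Submodule.span k s, χ.cotangentMap a = χ.cotangentMap h := by
    rw [← Submodule.mem_map, ← Submodule.span_image, hspan]
    trivial
  set z := h - a - algebraMap k H (χ (h - a))
  have hz : z ∈ (HomogeneousIdeal.irrelevant 𝒜).toIdeal ^ 2 := by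
    rw [← ker_augmentation 𝒜 hconn, ← AlgHom.cotangentMap_eq_zero_iff, map_sub, hqa, sub_self]
  have hdecomp : h = a + algebraMap k H (χ (h - a)) + z := by ring
  rw [← decompose_of_mem_same 𝒜 hh, hdecomp, decompose_add, decompose_add, DirectSum.add_apply,
    DirectSum.add_apply, AddMemClass.coe_add, AddMemClass.coe_add,
    decompose_of_mem_ne 𝒜 (SetLike.algebraMap_mem_graded 𝒜 _) hd.ne, add_zero]
  exact add_mem (Algebra.span_le_adjoin k s (coe_decompose_mem_span 𝒜 hs ha d))
    (HomogeneousIdeal.coe_decompose_mem_of_mem_irrelevant_sq 𝒜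
      (S := (Algebra.adjoin k s).toSubsemiring) ih hz)

end GradedAlgebra

theorem connected_graded_affine_commutative_hopf_is_polynomial_general
    {k H : Type*} [Field k] [CharZero k]
    [CommRing H] [HopfAlgebra k H] [hft : Algebra.FiniteType k H]
    (𝒜 : ℕ → Submodule k H) [GradedAlgebra 𝒜]
    (hconn : 𝒜 0 = (1 : Submodule k H)) :
    ∃ n : ℕ, Nonempty (H ≃ₐ[k] MvPolynomial (Fin n) k) := by
  have := Bialgebra.nontrivial k (A := H)
  set χ := GradedAlgebra.augmentation 𝒜 hconn
  obtain ⟨S, hShom, hSgen⟩ := GradedAlgebra.exists_finset_homogeneous_adjoin_eq_top 𝒜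
  obtain ⟨κ, a, ha, hspan, hli⟩ := exists_linearIndependent' k fun s : S => χ.cotangentMap s
  have := Finite.of_injective a ha
  have := Fintype.ofFinite κ
  set x : κ → H := fun i => a i
  have hgen : Algebra.adjoin k (Set.range x) = ⊤ := by
    refine GradedAlgebra.adjoin_eq_top_of_span_cotangentMap 𝒜 hconn
      (by rintro _ ⟨i, rfl⟩; exact hShom _ (a i).2) ?_
    rw [← Set.range_comp]
    exact hspan.trans (Set.image_eq_range _ _ ▸ χ.span_cotangentMap_image_eq_top hSgen)
  have hind : AlgebraicIndependent k x :=
    χ.algebraicIndependent_of_linearIndependent_cotangentMap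
      (GradedAlgebra.ker_augmentation 𝒜 hconn ▸ HomogeneousIdeal.iInf_irrelevant_pow_eq_bot 𝒜) hli
  exact ⟨Fintype.card κ, ⟨((hind.aevalEquiv.trans (Subalgebra.equivOfEq _ _ hgen)).trans
    Subalgebra.topEquiv).symm.trans (MvPolynomial.renameEquiv k (Fintype.equivFin κ))⟩⟩

/-- Let `k` be an algebraically closed field of characteristic zero and `H` a commutative
Hopf `k`-algebra which is finitely generated as a `k`-algebra. If `H` is connected graded
as an algebra (`H = ⊕ᵢ H(i)` with `H(i)H(j) ⊆ H(i+j)` and `H(0) = k·1`), then `H` is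
isomorphic as a `k`-algebra to a polynomial algebra in finitely many variables. -/
theorem connected_graded_affine_commutative_hopf_is_polynomial
    {k H : Type*} [Field k] [IsAlgClosed k] [CharZero k]
    [CommRing H] [HopfAlgebra k H] [hft : Algebra.FiniteType k H]
    (𝒜 : ℕ → Submodule k H) [GradedAlgebra 𝒜]
    (hconn : 𝒜 0 = (1 : Submodule k H)) :
    ∃ n : ℕ, Nonempty (H ≃ₐ[k] MvPolynomial (Fin n) k) :=
  connected_graded_affine_commutative_hopf_is_polynomial_general (hft := hft) 𝒜 hconn
end
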